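/- arXiv:1610.03975 — 6 statements merged into one kernel-verified Lean document; each statement's English description precedes it below -/
import Mathlib

section
/- In the Euclidean plane ℝ², let b > 0, let E_b = {(x,y) : x² + (y/b)² = 1} be an ellipse, and let L = {(x,y) : y = mx + β} be a line with E_b ∩ L = ∅. Let (x_n) be a Douglas–Rachford sequence for the pair (E_b, L): x_{n+1} = x_n + (b_n − a_n) where a_n ∈ E_b is a nearest point of E_b to x_n and b_n ∈ L is the nearest point of L to 2a_n − x_n. Then ‖x_{n+1} − x_n‖ ≥ d(E_b, L) > 0 for all n, and ‖x_n‖ → ∞; i.e., the iterates tend to infinity linearly with step size at least d(E_b, L). -/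
/-!
With `ℓ p = p 1 - m * p 0` the line is `L = {ℓ = β}`, and each step changes `ℓ (x n)` by
`β - ℓ (a n)`. The ellipse is compact, connected and misses `L`, so these increments all have
the same sign and are bounded away from `0`; hence `|ℓ (x n)|`, and with it `‖x n‖`, grows at
least linearly. The step `x (n + 1) - x n = c n - a n` joins a point of `E` to a point of `L`,
so it is at least `d(E, L)`, which is positive because `E` is compact and `L` closed.
-/

open Metric Filter Set

theorem tendsto_atTop_of_add_le_succ {u : ℕ → ℝ} {ε : ℝ} (hε : 0 < ε)
    (hu : ∀ n, u n + ε ≤ u (n + 1)) : Tendsto u atTop atTop := by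
  have hlin : ∀ n : ℕ, u 0 + n * ε ≤ u n := by
    intro n
    induction n with
    | zero => simp
    | succ k ih => push_cast; linarith [hu k]
  refine tendsto_atTop_mono hlin (tendsto_atTop_add_const_left _ _ ?_)
  exact tendsto_natCast_atTop_atTop.atTop_mul_const hε

theorem IsCompact.exists_pos_le_abs {S : Set ℝ} (hS : IsCompact S) (h0 : (0 : ℝ) ∉ S) :
    ∃ ε > 0, ∀ s ∈ S, ε ≤ |s| := by
  rcases S.eq_empty_or_nonempty with rfl | hne
  · exact ⟨1, one_pos, by simp⟩
  refine ⟨infDist 0 S, (hS.isClosed.notMem_iff_infDist_pos hne).1 h0, fun s hs => ?_⟩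
  simpa [dist_comm, Real.dist_0_eq_abs] using infDist_le_dist_of_mem (x := 0) hs

theorem IsPreconnected.subset_Ioi_or_subset_Iio {S : Set ℝ} (hS : IsPreconnected S)
    {a : ℝ} (ha : a ∉ S) : S ⊆ Ioi a ∨ S ⊆ Iio a := by
  refine hS.subset_or_subset isOpen_Ioi isOpen_Iio Ioi_disjoint_Iio_same ?_
  rwa [union_comm, Iio_union_Ioi, subset_compl_singleton_iff]

theorem tendsto_abs_atTop_of_add_mem {S : Set ℝ} (hS : IsCompact S) (hSc : IsPreconnected S)
    (h0 : (0 : ℝ) ∉ S) {u d : ℕ → ℝ} (hd : ∀ n, d n ∈ S) (hu : ∀ n, u (n + 1) = u n + d n) :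
    Tendsto (fun n => |u n|) atTop atTop := by
  obtain ⟨ε, hε, hεS⟩ := hS.exists_pos_le_abs h0
  rcases hSc.subset_Ioi_or_subset_Iio h0 with hpos | hneg
  · refine tendsto_abs_atTop_atTop.comp (tendsto_atTop_of_add_le_succ hε fun n => ?_)
    have := hεS _ (hd n)
    rw [abs_of_pos (hpos (hd n))] at this
    linarith [hu n]
  · have : Tendsto (fun n => -u n) atTop atTop := by
      refine tendsto_atTop_of_add_le_succ hε fun n => ?_
      have := hεS _ (hd n)
      rw [abs_of_neg (hneg (hd n))] at this
      linarith [hu n]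
    simpa only [Function.comp_def, abs_neg] using tendsto_abs_atTop_atTop.comp this

theorem tendsto_norm_atTop_of_succ_eq_add_sub {V : Type*} [NormedAddCommGroup V]
    [NormedSpace ℝ V] (ℓ : V →L[ℝ] ℝ) {β : ℝ} {K : Set V} (hK : IsCompact K)
    (hKc : IsPreconnected K) (hKℓ : ∀ p ∈ K, ℓ p ≠ β) {x a c : ℕ → V} (ha : ∀ n, a n ∈ K)
    (hc : ∀ n, ℓ (c n) = β) (hx : ∀ n, x (n + 1) = x n + (c n - a n)) :
    Tendsto (fun n => ‖x n‖) atTop atTop := by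
  have hcont : Continuous fun p => β - ℓ p := by fun_prop
  have hℓx : Tendsto (fun n => |ℓ (x n)|) atTop atTop := by
    refine tendsto_abs_atTop_of_add_mem (hK.image hcont) (hKc.image _ hcont.continuousOn)
      ?_ (d := fun n => β - ℓ (a n)) (fun n => mem_image_of_mem _ (ha n)) fun n => ?_
    · rintro ⟨p, hp, hp0⟩
      exact hKℓ p hp (by linarith)
    · rw [hx n, map_add, map_sub, hc n]
  have hbound : ∀ n, |ℓ (x n)| / (‖ℓ‖ + 1) ≤ ‖x n‖ := fun n => by
    rw [div_le_iff₀ (by positivity), ← Real.norm_eq_abs]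
    nlinarith [ℓ.le_opNorm (x n), norm_nonneg (x n)]
  exact tendsto_atTop_mono hbound (hℓx.atTop_div_const (by positivity))

section SetDistance

variable {E : Type*} [SeminormedAddCommGroup E] {K F : Set E}

theorem sInf_norm_sub_le {p q : E} (hp : p ∈ K) (hq : q ∈ F) :
    sInf {d : ℝ | ∃ p ∈ K, ∃ q ∈ F, d = ‖p - q‖} ≤ ‖p - q‖ :=
  csInf_le ⟨0, by rintro _ ⟨p, -, q, -, rfl⟩; exact norm_nonneg _⟩ ⟨p, hp, q, hq, rfl⟩

theorem sInf_norm_sub_pos (hK : IsCompact K) (hF : IsClosed F) (hKF : Disjoint K F)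
    (hKne : K.Nonempty) (hFne : F.Nonempty) :
    0 < sInf {d : ℝ | ∃ p ∈ K, ∃ q ∈ F, d = ‖p - q‖} := by
  obtain ⟨r, hr, hrKF⟩ := exists_pos_forall_lt_edist hK hF hKF
  obtain ⟨p, hp⟩ := hKne
  obtain ⟨q, hq⟩ := hFne
  refine lt_of_lt_of_le hr (le_csInf ⟨_, p, hp, q, hq, rfl⟩ ?_)
  rintro _ ⟨p, hp, q, hq, rfl⟩
  have hpq := hrKF p hp q hq
  rw [edist_dist, ENNReal.coe_lt_ofReal] at hpq
  exact (dist_eq_norm p q ▸ hpq).le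

end SetDistance

noncomputable def ellipseMap (b : ℝ) (q : EuclideanSpace ℝ (Fin 2)) : EuclideanSpace ℝ (Fin 2) :=
  !₂[q 0, b * q 1]

theorem continuous_ellipseMap (b : ℝ) : Continuous (ellipseMap b) := by
  unfold ellipseMap
  fun_prop

theorem setOf_ellipse_eq_image_sphere {b : ℝ} (hb : b ≠ 0) :
    {p : EuclideanSpace ℝ (Fin 2) | (p 0) ^ 2 + (p 1 / b) ^ 2 = 1} =
      ellipseMap b '' sphere 0 1 := by
  have mem_sphere (q : EuclideanSpace ℝ (Fin 2)) :
      q ∈ sphere 0 1 ↔ (q 0) ^ 2 + (q 1) ^ 2 = 1 := by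
    rw [mem_sphere_zero_iff_norm, ← pow_eq_one_iff_of_nonneg (norm_nonneg q) two_ne_zero,
      EuclideanSpace.real_norm_sq_eq, Fin.sum_univ_two]
  ext p
  simp only [mem_ofPred_eq, mem_image, mem_sphere]
  constructor
  · intro hp
    refine ⟨!₂[p 0, p 1 / b], by simpa using hp, ?_⟩
    ext i
    fin_cases i <;> simp [ellipseMap, mul_div_cancel₀ _ hb]
  · rintro ⟨q, hq, rfl⟩
    simpa [ellipseMap, mul_div_cancel_left₀ _ hb] using hq

theorem isCompact_image_sphere_ellipseMap (b : ℝ) : IsCompact (ellipseMap b '' sphere 0 1) :=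
  (isCompact_sphere 0 1).image (continuous_ellipseMap b)

theorem isPreconnected_image_sphere_ellipseMap (b : ℝ) :
    IsPreconnected (ellipseMap b '' sphere 0 1) := by
  have hrank : 1 < Module.rank ℝ (EuclideanSpace ℝ (Fin 2)) := by
    rw [← Module.finrank_eq_rank, finrank_euclideanSpace_fin]
    norm_num
  exact (isPreconnected_sphere hrank 0 1).image _ (continuous_ellipseMap b).continuousOn

theorem douglasRachford_ellipse_line_infeasible_general
    (b m β : ℝ) (hb : 0 < b)
    (E L : Set (EuclideanSpace ℝ (Fin 2)))
    (hE : E = {p : EuclideanSpace ℝ (Fin 2) | (p 0) ^ 2 + (p 1 / b) ^ 2 = 1})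
    (hL : L = {p : EuclideanSpace ℝ (Fin 2) | p 1 = m * p 0 + β})
    (hdisj : E ∩ L = ∅)
    (x a c : ℕ → EuclideanSpace ℝ (Fin 2))
    (haE : ∀ n, a n ∈ E)
    (hcL : ∀ n, c n ∈ L)
    (hrec : ∀ n : ℕ, x (n + 1) = x n + (c n - a n)) :
    (∀ n : ℕ, sInf {d : ℝ | ∃ p ∈ E, ∃ q ∈ L, d = ‖p - q‖} ≤ ‖x (n + 1) - x n‖) ∧
      0 < sInf {d : ℝ | ∃ p ∈ E, ∃ q ∈ L, d = ‖p - q‖} ∧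
      Tendsto (fun n : ℕ => ‖x n‖) atTop atTop := by
  rw [setOf_ellipse_eq_image_sphere hb.ne'] at hE
  subst hE
  set ℓ : EuclideanSpace ℝ (Fin 2) →L[ℝ] ℝ :=
    EuclideanSpace.proj 1 - m • EuclideanSpace.proj 0
  have hLℓ : L = {p | ℓ p = β} := by
    rw [hL]
    ext p
    simp [ℓ, sub_eq_iff_eq_add']
  have hEne : (ellipseMap b '' sphere 0 1).Nonempty :=
    (NormedSpace.sphere_nonempty.2 zero_le_one).image _
  have hLne : L.Nonempty := ⟨!₂[0, β], by simp [hL]⟩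
  have hLclosed : IsClosed L := hLℓ ▸ isClosed_eq ℓ.continuous continuous_const
  refine ⟨fun n => ?_, ?_, ?_⟩
  · rw [hrec n, add_sub_cancel_left, norm_sub_rev]
    exact sInf_norm_sub_le (haE n) (hcL n)
  · exact sInf_norm_sub_pos (isCompact_image_sphere_ellipseMap b) hLclosed
      (disjoint_iff_inter_eq_empty.2 hdisj) hEne hLne
  · refine tendsto_norm_atTop_of_succ_eq_add_sub ℓ (isCompact_image_sphere_ellipseMap b)
      (isPreconnected_image_sphere_ellipseMap b) (fun p hpE hpL => ?_) haE
      (fun n => hLℓ ▸ hcL n) hrec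
    exact hdisj.subset ⟨hpE, hLℓ ▸ hpL⟩

/-- For a disjoint ellipse `E_b` and line `L` in the Euclidean plane, the
Douglas–Rachford iterates with nearest-point selections satisfy
`‖x_{n+1} − x_n‖ ≥ d(E_b, L) > 0` and `‖x n‖ → ∞`. -/
theorem douglasRachford_ellipse_line_infeasible
    (b m β : ℝ) (hb : 0 < b)
    (E L : Set (EuclideanSpace ℝ (Fin 2)))
    (hE : E = {p : EuclideanSpace ℝ (Fin 2) | (p 0) ^ 2 + (p 1 / b) ^ 2 = 1})
    (hL : L = {p : EuclideanSpace ℝ (Fin 2) | p 1 = m * p 0 + β})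
    (hdisj : E ∩ L = ∅)
    (x a c : ℕ → EuclideanSpace ℝ (Fin 2))
    (haE : ∀ n, a n ∈ E) (hanear : ∀ n, ‖x n - a n‖ = infDist (x n) E)
    (hcL : ∀ n, c n ∈ L)
    (hcnear : ∀ n, ‖(2 • a n - x n) - c n‖ = infDist (2 • a n - x n) L)
    (hrec : ∀ n : ℕ, x (n + 1) = x n + (c n - a n)) :
    (∀ n : ℕ, sInf {d : ℝ | ∃ p ∈ E, ∃ q ∈ L, d = ‖p - q‖} ≤ ‖x (n + 1) - x n‖) ∧
      0 < sInf {d : ℝ | ∃ p ∈ E, ∃ q ∈ L, d = ‖p - q‖} ∧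
      Tendsto (fun n : ℕ => ‖x n‖) atTop atTop :=
  douglasRachford_ellipse_line_infeasible_general b m β hb E L hE hL hdisj x a c haE hcL hrec
end

section
/- In the Euclidean plane ℝ², let p ≥ 1, let S_p = {(x,y) : |x|^p + |y|^p = 1} be the p-sphere (the unit sphere of the ℓ_p norm on ℝ²), and let L = {(x,y) : y = mx + β} be a line with S_p ∩ L = ∅. Let (x_n) be a Douglas–Rachford sequence for the pair (S_p, L): x_{n+1} = x_n + (b_n − a_n) where a_n ∈ S_p is a nearest point of S_p to x_n and b_n ∈ L is the nearest point of L to 2a_n − x_n. Then ‖x_{n+1} − x_n‖ ≥ d(S_p, L) > 0 for all n, and ‖x_n‖ → ∞; i.e., the iterates tend to infinity linearly with step size at least d(S_p, L). -/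
/-!
A line `L` missing `S_p` lies on one side of it: `S_p`, the unit sphere of the `ℓ_p` norm, is
compact and connected, so an affine function vanishing on `L` has constant sign on `S_p` and is
bounded away from `0` there. After normalising, a linear functional `φ` takes a constant value
`s` on `L` and values `≥ s + δ` on `S_p`. Each Douglas–Rachford step `x_n ↦ x_n + (b_n - a_n)`
then lowers `φ` by at least `δ`, so `φ(x_n) → -∞` and `‖x_n‖ → ∞`; the same bound
`δ ≤ φ(a) - φ(b) ≤ ‖φ‖ ‖a - b‖` keeps `S_p` and `L` at positive distance.
-/

open Metric Filter

theorem IsPreconnected.forall_lt_or_forall_gt {X α : Type*} [TopologicalSpace X] [LinearOrder α]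
    [TopologicalSpace α] [OrderClosedTopology α] {S : Set X} (hS : IsPreconnected S) {f : X → α}
    (hf : ContinuousOn f S) {t : α} (hft : ∀ q ∈ S, f q ≠ t) :
    (∀ q ∈ S, t < f q) ∨ ∀ q ∈ S, f q < t := by
  by_contra! h
  obtain ⟨⟨a, ha, hat⟩, ⟨b, hb, htb⟩⟩ := h
  obtain ⟨q, hq, hqt⟩ := hS.intermediate_value ha hb hf ⟨hat, htb⟩
  exact hft q hq hqt

theorem sInf_dist_le {E : Type*} [SeminormedAddCommGroup E] {S L : Set E} {q r : E} (hq : q ∈ S)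
    (hr : r ∈ L) : sInf {d : ℝ | ∃ q ∈ S, ∃ r ∈ L, d = ‖q - r‖} ≤ ‖q - r‖ :=
  csInf_le ⟨0, by rintro _ ⟨q, -, r, -, rfl⟩; exact norm_nonneg _⟩ ⟨q, hq, r, hr, rfl⟩

section Separation

variable {E : Type*} [NormedAddCommGroup E] [NormedSpace ℝ E]

theorem exists_functional_separating_of_isCompact_of_isPreconnected {S : Set E}
    (hSc : IsCompact S) (hSconn : IsPreconnected S) (f : E →L[ℝ] ℝ) {t : ℝ}
    (hft : ∀ q ∈ S, f q ≠ t) :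
    ∃ φ : E →L[ℝ] ℝ, ∃ s δ : ℝ, 0 < δ ∧ (∀ r, f r = t → φ r = s) ∧ ∀ q ∈ S, s + δ ≤ φ q := by
  rcases hSconn.forall_lt_or_forall_gt f.continuous.continuousOn hft with hgt | hlt
  · obtain ⟨t', htt', ht'⟩ := hSc.exists_forall_le' f.continuous.continuousOn hgt
    exact ⟨f, t, t' - t, by linarith, fun r hr => hr, fun q hq => by linarith [ht' q hq]⟩
  · obtain ⟨t', htt', ht'⟩ := hSc.exists_forall_le' (-f).continuous.continuousOn
      (a := -t) fun q hq => by simpa using hlt q hq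
    exact ⟨-f, -t, t' + t, by linarith, fun r hr => by simp [hr],
      fun q hq => by linarith [ht' q hq]⟩

variable {S L : Set E} {φ : E →L[ℝ] ℝ} {s δ : ℝ}

theorem le_opNorm_mul_norm_sub_of_separates (hφL : ∀ r ∈ L, φ r = s)
    (hφS : ∀ q ∈ S, s + δ ≤ φ q) {q r : E} (hq : q ∈ S) (hr : r ∈ L) :
    δ ≤ ‖φ‖ * ‖q - r‖ :=
  calc δ ≤ φ q - φ r := by linarith [hφS q hq, hφL r hr]
    _ = φ (q - r) := (map_sub φ q r).symm
    _ ≤ ‖φ (q - r)‖ := le_abs_self _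
    _ ≤ ‖φ‖ * ‖q - r‖ := φ.le_opNorm _

theorem opNorm_pos_of_separates (hδ : 0 < δ) (hφL : ∀ r ∈ L, φ r = s)
    (hφS : ∀ q ∈ S, s + δ ≤ φ q) {q r : E} (hq : q ∈ S) (hr : r ∈ L) : 0 < ‖φ‖ :=
  pos_of_mul_pos_left (hδ.trans_le (le_opNorm_mul_norm_sub_of_separates hφL hφS hq hr))
    (norm_nonneg _)

theorem sInf_dist_pos_of_separates (hδ : 0 < δ) (hφL : ∀ r ∈ L, φ r = s)
    (hφS : ∀ q ∈ S, s + δ ≤ φ q) (hS : S.Nonempty) (hL : L.Nonempty) :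
    0 < sInf {d : ℝ | ∃ q ∈ S, ∃ r ∈ L, d = ‖q - r‖} := by
  obtain ⟨q, hq⟩ := hS
  obtain ⟨r, hr⟩ := hL
  have hφ := opNorm_pos_of_separates hδ hφL hφS hq hr
  refine (div_pos hδ hφ).trans_le (le_csInf ⟨_, q, hq, r, hr, rfl⟩ ?_)
  rintro _ ⟨q, hq, r, hr, rfl⟩
  rw [div_le_iff₀' hφ]
  exact le_opNorm_mul_norm_sub_of_separates hφL hφS hq hr

variable {x a c : ℕ → E}

theorem apply_iterate_le (hφL : ∀ r ∈ L, φ r = s) (hφS : ∀ q ∈ S, s + δ ≤ φ q)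
    (ha : ∀ n, a n ∈ S) (hc : ∀ n, c n ∈ L) (hrec : ∀ n, x (n + 1) = x n + (c n - a n))
    (n : ℕ) : φ (x n) ≤ φ (x 0) - n * δ := by
  induction n with
  | zero => simp
  | succ n ih =>
    rw [hrec n, map_add, map_sub, hφL _ (hc n)]
    push_cast
    linarith [hφS _ (ha n)]

theorem tendsto_norm_iterate_atTop (hδ : 0 < δ) (hφL : ∀ r ∈ L, φ r = s)
    (hφS : ∀ q ∈ S, s + δ ≤ φ q) (ha : ∀ n, a n ∈ S) (hc : ∀ n, c n ∈ L)
    (hrec : ∀ n, x (n + 1) = x n + (c n - a n)) :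
    Tendsto (fun n => ‖x n‖) atTop atTop := by
  refine Tendsto.atTop_of_const_mul₀ (opNorm_pos_of_separates hδ hφL hφS (ha 0) (hc 0)) ?_
  have hlin : Tendsto (fun n : ℕ => n * δ - φ (x 0)) atTop atTop :=
    tendsto_atTop_add_const_right _ _ (tendsto_natCast_atTop_atTop.atTop_mul_const hδ)
  refine tendsto_atTop_mono (fun n => ?_) hlin
  calc n * δ - φ (x 0) ≤ -φ (x n) := by linarith [apply_iterate_le hφL hφS ha hc hrec n]
    _ ≤ ‖φ (x n)‖ := neg_le_abs _
    _ ≤ ‖φ‖ * ‖x n‖ := φ.le_opNorm _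

end Separation

abbrev LpPlane (p : ℝ) := PiLp (ENNReal.ofReal p) (fun _ : Fin 2 => ℝ)

theorem LpPlane.norm_eq_one_iff {p : ℝ} (hp : 0 < p) (v : LpPlane p) :
    ‖v‖ = 1 ↔ |v 0| ^ p + |v 1| ^ p = 1 := by
  have hsum : 0 ≤ |v 0| ^ p + |v 1| ^ p := by positivity
  rw [PiLp.norm_eq_sum (by rwa [ENNReal.toReal_ofReal hp.le]), ENNReal.toReal_ofReal hp.le,
    Fin.sum_univ_two, ← Real.rpow_left_inj hsum zero_le_one (one_div_pos.2 hp).ne', Real.one_rpow]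
  simp only [Real.norm_eq_abs]

theorem LpPlane.one_lt_rank (p : ℝ) : 1 < Module.rank ℝ (LpPlane p) := by
  rw [(WithLp.linearEquiv _ ℝ (Fin 2 → ℝ)).rank_eq, rank_fin_fun]
  norm_num

def LpPlane.toEuclidean (p : ℝ) (v : LpPlane p) : EuclideanSpace ℝ (Fin 2) :=
  WithLp.toLp 2 (WithLp.ofLp v)

theorem LpPlane.continuous_toEuclidean (p : ℝ) : Continuous (LpPlane.toEuclidean p) :=
  (PiLp.continuous_toLp _ _).comp (PiLp.continuous_ofLp _ _)

theorem pSphere_eq_image_sphere {p : ℝ} [Fact (1 ≤ ENNReal.ofReal p)] :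
    {q : EuclideanSpace ℝ (Fin 2) | |q 0| ^ p + |q 1| ^ p = 1} =
      LpPlane.toEuclidean p '' sphere 0 1 := by
  have hp : 1 ≤ p := ENNReal.one_le_ofReal.1 Fact.out
  ext q
  simp only [Set.mem_ofPred_eq, Set.mem_image, mem_sphere_zero_iff_norm,
    LpPlane.norm_eq_one_iff (zero_lt_one.trans_le hp)]
  exact ⟨fun h => ⟨WithLp.toLp _ (WithLp.ofLp q), h, rfl⟩, fun ⟨v, hv, hvq⟩ => hvq ▸ hv⟩

theorem isCompact_pSphere {p : ℝ} (hp : 1 ≤ p) :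
    IsCompact {q : EuclideanSpace ℝ (Fin 2) | |q 0| ^ p + |q 1| ^ p = 1} := by
  have : Fact (1 ≤ ENNReal.ofReal p) := ⟨ENNReal.one_le_ofReal.2 hp⟩
  rw [pSphere_eq_image_sphere]
  exact (isCompact_sphere 0 1).image (LpPlane.continuous_toEuclidean p)

theorem isPreconnected_pSphere {p : ℝ} (hp : 1 ≤ p) :
    IsPreconnected {q : EuclideanSpace ℝ (Fin 2) | |q 0| ^ p + |q 1| ^ p = 1} := by
  have : Fact (1 ≤ ENNReal.ofReal p) := ⟨ENNReal.one_le_ofReal.2 hp⟩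
  rw [pSphere_eq_image_sphere]
  exact (isPreconnected_sphere (LpPlane.one_lt_rank p) 0 1).image _
    (LpPlane.continuous_toEuclidean p).continuousOn

theorem douglasRachford_pSphere_line_infeasible_general
    (p m β : ℝ) (hp : 1 ≤ p)
    (S L : Set (EuclideanSpace ℝ (Fin 2)))
    (hS : S = {q : EuclideanSpace ℝ (Fin 2) | |q 0| ^ p + |q 1| ^ p = 1})
    (hL : L = {q : EuclideanSpace ℝ (Fin 2) | q 1 = m * q 0 + β})
    (hdisj : S ∩ L = ∅)
    (x a c : ℕ → EuclideanSpace ℝ (Fin 2))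
    (haS : ∀ n, a n ∈ S)
    (hcL : ∀ n, c n ∈ L)
    (hrec : ∀ n : ℕ, x (n + 1) = x n + (c n - a n)) :
    (∀ n : ℕ, sInf {d : ℝ | ∃ q ∈ S, ∃ r ∈ L, d = ‖q - r‖} ≤ ‖x (n + 1) - x n‖) ∧
      0 < sInf {d : ℝ | ∃ q ∈ S, ∃ r ∈ L, d = ‖q - r‖} ∧
      Tendsto (fun n : ℕ => ‖x n‖) atTop atTop := by
  let f : EuclideanSpace ℝ (Fin 2) →L[ℝ] ℝ := m • EuclideanSpace.proj 0 - EuclideanSpace.proj 1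
  have hfL : ∀ r, r ∈ L ↔ f r = -β := fun r => by
    change r ∈ L ↔ m * r 0 - r 1 = -β
    rw [hL, Set.mem_ofPred_eq]
    constructor <;> intro h <;> linarith
  have hfS : ∀ q ∈ S, f q ≠ -β := fun q hq hq' =>
    Set.eq_empty_iff_forall_notMem.1 hdisj q ⟨hq, (hfL q).2 hq'⟩
  obtain ⟨φ, s, δ, hδ, hφf, hφS⟩ := exists_functional_separating_of_isCompact_of_isPreconnected
    (hS ▸ isCompact_pSphere hp) (hS ▸ isPreconnected_pSphere hp) f hfS
  have hφL : ∀ r ∈ L, φ r = s := fun r hr => hφf r ((hfL r).1 hr)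
  refine ⟨fun n => ?_, sInf_dist_pos_of_separates hδ hφL hφS ⟨_, haS 0⟩ ⟨_, hcL 0⟩,
    tendsto_norm_iterate_atTop hδ hφL hφS haS hcL hrec⟩
  rw [hrec n, add_sub_cancel_left, norm_sub_rev]
  exact sInf_dist_le (haS n) (hcL n)

/-- For a disjoint `p`-sphere `S_p` (`p ≥ 1`) and line `L` in the Euclidean
plane, the Douglas–Rachford iterates with nearest-point selections satisfy
`‖x_{n+1} − x_n‖ ≥ d(S_p, L) > 0` and `‖x n‖ → ∞`. -/
theorem douglasRachford_pSphere_line_infeasible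
    (p m β : ℝ) (hp : 1 ≤ p)
    (S L : Set (EuclideanSpace ℝ (Fin 2)))
    (hS : S = {q : EuclideanSpace ℝ (Fin 2) | |q 0| ^ p + |q 1| ^ p = 1})
    (hL : L = {q : EuclideanSpace ℝ (Fin 2) | q 1 = m * q 0 + β})
    (hdisj : S ∩ L = ∅)
    (x a c : ℕ → EuclideanSpace ℝ (Fin 2))
    (haS : ∀ n, a n ∈ S) (hanear : ∀ n, ‖x n - a n‖ = infDist (x n) S)
    (hcL : ∀ n, c n ∈ L)
    (hcnear : ∀ n, ‖(2 • a n - x n) - c n‖ = infDist (2 • a n - x n) L)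
    (hrec : ∀ n : ℕ, x (n + 1) = x n + (c n - a n)) :
    (∀ n : ℕ, sInf {d : ℝ | ∃ q ∈ S, ∃ r ∈ L, d = ‖q - r‖} ≤ ‖x (n + 1) - x n‖) ∧
      0 < sInf {d : ℝ | ∃ q ∈ S, ∃ r ∈ L, d = ‖q - r‖} ∧
      Tendsto (fun n : ℕ => ‖x n‖) atTop atTop :=
  douglasRachford_pSphere_line_infeasible_general p m β hp S L hS hL hdisj x a c haS hcL hrec
end

section
/- Let U and V be nonempty closed convex subsets of a real Hilbert space H, with boundaries A = frontier U and B = frontier V. Let x ∈ H satisfy x ∉ U and 2P_U x − x ∉ V. Then: (i) the unique nearest point of x in A is P_U x; (ii) the unique nearest point of 2P_U x − x in B is P_V(2P_U x − x); and consequently (iii) the Douglas–Rachford step for the boundaries agrees with the convex Douglas–Rachford step: (1/2)(x + R_B R_A x) = (1/2)(x + R_V R_U x) = T_{U,V} x, where R_A x = 2P_U x − x and R_B y = 2P_V y − y are computed using these nearest-point selections. -/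
/-!
A nearest point `p` of `x ∉ U` in `U` cannot be interior: moving from `p` a little towards `x`
would stay in `U` and get closer to `x`. So `p` lies on the frontier, which sits inside
`closure U`, where the distance to `x` is still minimised by `p`. Any other minimiser on the
frontier is then a nearest point of `x` in the convex set `closure U`, and a strictly convex
norm allows only one such point. Applying this to `x` in `U` and to `2 P_U x - x` in `V` pins
down both nearest-point selections, so the boundary Douglas–Rachford step is the convex one.
-/

open Metric Filter Topology

def IsNearestPoint {E : Type*} [PseudoMetricSpace E] (s : Set E) (x p : E) : Prop :=
  p ∈ s ∧ ∀ y ∈ s, dist x p ≤ dist x y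

section PseudoMetric

variable {E : Type*} [PseudoMetricSpace E] {s t : Set E} {x p q : E}

theorem isNearestPoint_iff : IsNearestPoint s x p ↔ p ∈ s ∧ dist x p = infDist x s :=
  ⟨fun h => ⟨h.1, le_antisymm ((le_infDist ⟨p, h.1⟩).2 h.2) (infDist_le_dist_of_mem h.1)⟩,
    fun h => ⟨h.1, fun _ hy => h.2 ▸ infDist_le_dist_of_mem hy⟩⟩

theorem IsNearestPoint.closure (h : IsNearestPoint s x p) : IsNearestPoint (closure s) x p := by
  rw [isNearestPoint_iff, infDist_closure] at *
  exact ⟨subset_closure h.1, h.2⟩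

theorem IsNearestPoint.mono (h : IsNearestPoint t x p) (hst : s ⊆ t) (hp : p ∈ s) :
    IsNearestPoint s x p :=
  ⟨hp, fun y hy => h.2 y (hst hy)⟩

theorem IsNearestPoint.of_dist_eq (h : IsNearestPoint s x p) (hq : q ∈ s)
    (hd : dist x q = dist x p) : IsNearestPoint s x q :=
  ⟨hq, fun y hy => hd ▸ h.2 y hy⟩

end PseudoMetric

section Normed

variable {E : Type*} [NormedAddCommGroup E] [NormedSpace ℝ E] {s : Set E} {x p q : E}

theorem IsNearestPoint.notMem_interior (h : IsNearestPoint s x p) (hpx : p ≠ x) :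
    p ∉ interior s := by
  intro hp
  have hnear : ∀ᶠ t in 𝓝[>] (0 : ℝ), AffineMap.lineMap p x t ∈ s ∧ t < 1 := by
    have hcont : Tendsto (fun t : ℝ => AffineMap.lineMap p x t) (𝓝 0) (𝓝 p) := by
      simpa using (AffineMap.lineMap_continuous (p := p) (q := x)).tendsto (0 : ℝ)
    exact nhdsWithin_le_nhds ((hcont.eventually (mem_interior_iff_mem_nhds.1 hp)).and
      (gt_mem_nhds one_pos))
  obtain ⟨t, ⟨hts, ht1⟩, ht0⟩ := (hnear.and self_mem_nhdsWithin).exists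
  have hle := h.2 _ hts
  rw [dist_comm x (AffineMap.lineMap p x t), dist_lineMap_right,
    Real.norm_of_nonneg (by linarith), dist_comm] at hle
  nlinarith [dist_pos.2 hpx, ht0]

theorem IsNearestPoint.mem_frontier (h : IsNearestPoint s x p) (hx : x ∉ s) : p ∈ frontier s :=
  ⟨subset_closure h.1, h.notMem_interior fun hpx => hx (hpx ▸ h.1)⟩

theorem IsNearestPoint.eq_of_convex [StrictConvexSpace ℝ E] (hs : Convex ℝ s)
    (hp : IsNearestPoint s x p) (hq : IsNearestPoint s x q) : p = q := by
  by_contra hpq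
  have hd : ‖x - p‖ = ‖x - q‖ := by
    rw [← dist_eq_norm, ← dist_eq_norm]; exact (hp.2 q hq.1).antisymm (hq.2 p hp.1)
  have hlt := (norm_midpoint_lt_iff hd).2 (fun h => hpq (sub_right_injective h))
  have hmid := hp.2 _ (hs.midpoint_mem hp.1 hq.1)
  have hxm : x - midpoint ℝ p q = (1 / 2 : ℝ) • ((x - p) + (x - q)) := by
    rw [midpoint_eq_smul_add, invOf_eq_inv]; module
  rw [dist_eq_norm, dist_eq_norm, hxm] at hmid
  exact hmid.not_gt hlt

theorem IsNearestPoint.uniqueNearestPoint_frontier [StrictConvexSpace ℝ E] (hs : Convex ℝ s)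
    (h : IsNearestPoint s x p) (hx : x ∉ s) :
    p ∈ frontier s ∧ ‖x - p‖ = infDist x (frontier s) ∧
      ∀ y ∈ frontier s, ‖x - y‖ = infDist x (frontier s) → y = p := by
  have hpF := h.mem_frontier hx
  have hdist := (isNearestPoint_iff.1 (h.closure.mono frontier_subset_closure hpF)).2
  rw [← dist_eq_norm, ← hdist]
  refine ⟨hpF, rfl, fun y hy hdy => ?_⟩
  rw [← dist_eq_norm] at hdy
  exact (h.closure.of_dist_eq (frontier_subset_closure hy) hdy).eq_of_convex hs.closure h.closure

end Normed

theorem douglasRachford_boundary_step_eq_convex_step_general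
    {H : Type*} [NormedAddCommGroup H] [InnerProductSpace ℝ H]
    (U V : Set H)
    (hUconv : Convex ℝ U)
    (hVconv : Convex ℝ V)
    (PU PV : H → H)
    (hPU : ∀ z : H, PU z ∈ U ∧ ∀ y ∈ U, dist z (PU z) ≤ dist z y)
    (hPV : ∀ z : H, PV z ∈ V ∧ ∀ y ∈ V, dist z (PV z) ≤ dist z y)
    (x : H) (hxU : x ∉ U) (hxV : 2 • PU x - x ∉ V) :
    (PU x ∈ frontier U ∧ ‖x - PU x‖ = infDist x (frontier U) ∧
      ∀ y ∈ frontier U, ‖x - y‖ = infDist x (frontier U) → y = PU x) ∧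
    (PV (2 • PU x - x) ∈ frontier V ∧
      ‖(2 • PU x - x) - PV (2 • PU x - x)‖ = infDist (2 • PU x - x) (frontier V) ∧
      ∀ y ∈ frontier V, ‖(2 • PU x - x) - y‖ = infDist (2 • PU x - x) (frontier V) →
        y = PV (2 • PU x - x)) ∧
    (∀ a ∈ frontier U, ‖x - a‖ = infDist x (frontier U) →
      ∀ c ∈ frontier V, ‖(2 • a - x) - c‖ = infDist (2 • a - x) (frontier V) →
        (1 / 2 : ℝ) • (x + (2 • c - (2 • a - x))) =
          (1 / 2 : ℝ) • (x + (2 • PV (2 • PU x - x) - (2 • PU x - x)))) := by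
  have hA := IsNearestPoint.uniqueNearestPoint_frontier hUconv (hPU x) hxU
  have hB := IsNearestPoint.uniqueNearestPoint_frontier hVconv (hPV (2 • PU x - x)) hxV
  refine ⟨hA, hB, fun a ha hda c hc hdc => ?_⟩
  obtain rfl := hA.2.2 a ha hda
  rw [hB.2.2 c hc hdc]

/-- For nonempty closed convex sets `U, V` with metric projections `PU, PV`,
if `x ∉ U` and `2 PU x − x ∉ V`, then (i) `PU x` is the unique nearest point of `x` in
`frontier U`; (ii) `PV (2 PU x − x)` is the unique nearest point of `2 PU x − x` in
`frontier V`; and (iii) the Douglas–Rachford step for the boundaries (with any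
nearest-point selections) agrees with the convex Douglas–Rachford step `T_{U,V} x`. -/
theorem douglasRachford_boundary_step_eq_convex_step
    {H : Type*} [NormedAddCommGroup H] [InnerProductSpace ℝ H] [CompleteSpace H]
    (U V : Set H)
    (hUne : U.Nonempty) (hUcl : IsClosed U) (hUconv : Convex ℝ U)
    (hVne : V.Nonempty) (hVcl : IsClosed V) (hVconv : Convex ℝ V)
    (PU PV : H → H)
    (hPU : ∀ z : H, PU z ∈ U ∧ ∀ y ∈ U, dist z (PU z) ≤ dist z y)
    (hPV : ∀ z : H, PV z ∈ V ∧ ∀ y ∈ V, dist z (PV z) ≤ dist z y)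
    (x : H) (hxU : x ∉ U) (hxV : 2 • PU x - x ∉ V) :
    (PU x ∈ frontier U ∧ ‖x - PU x‖ = infDist x (frontier U) ∧
      ∀ y ∈ frontier U, ‖x - y‖ = infDist x (frontier U) → y = PU x) ∧
    (PV (2 • PU x - x) ∈ frontier V ∧
      ‖(2 • PU x - x) - PV (2 • PU x - x)‖ = infDist (2 • PU x - x) (frontier V) ∧
      ∀ y ∈ frontier V, ‖(2 • PU x - x) - y‖ = infDist (2 • PU x - x) (frontier V) →
        y = PV (2 • PU x - x)) ∧
    (∀ a ∈ frontier U, ‖x - a‖ = infDist x (frontier U) →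
      ∀ c ∈ frontier V, ‖(2 • a - x) - c‖ = infDist (2 • a - x) (frontier V) →
        (1 / 2 : ℝ) • (x + (2 • c - (2 • a - x))) =
          (1 / 2 : ℝ) • (x + (2 • PV (2 • PU x - x) - (2 • PU x - x)))) :=
  douglasRachford_boundary_step_eq_convex_step_general U V hUconv hVconv PU PV hPU hPV x hxU hxV
end

section
/- Let M and N be closed linear subspaces of a real Hilbert space H and define the twisted Douglas–Rachford operator V := P_M ∘ P_N + P_{N⊥} ∘ P_{M⊥}. Then for every integer n ≥ 1, V^n = (P_M ∘ P_N)^n + (P_{N⊥} ∘ P_{M⊥})^n; consequently, the iterates x_n = V^n(x_0) decompose as x_n = u_n + v_n where u_n = (P_M P_N)^n x_0 satisfies u_{n+1} = P_M P_N u_n and v_n = (P_{N⊥} P_{M⊥})^n x_0 satisfies v_{n+1} = P_{N⊥} P_{M⊥} v_n. -/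
/-! The two summands `A = P_M P_N` and `B = P_{N⊥} P_{M⊥}` of the twisted Douglas–Rachford
operator annihilate each other in either order, because `P_N P_{N⊥} = 0` and `P_{M⊥} P_M = 0`.
Hence every mixed word in the expansion of `(A + B)ⁿ` vanishes and `(A + B)ⁿ = Aⁿ + Bⁿ` for
`n ≥ 1`; the recursions for `u_n` and `v_n` are just the definition of iteration. -/

theorem add_pow_eq_pow_add_pow_of_mul_eq_zero {R : Type*} [Semiring R] {a b : R}
    (hab : a * b = 0) (hba : b * a = 0) (n : ℕ) : (a + b) ^ (n + 1) = a ^ (n + 1) + b ^ (n + 1) := by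
  induction n with
  | zero => simp only [zero_add, pow_one]
  | succ n ih =>
    have ha : a * b ^ (n + 1) = 0 := by rw [pow_succ', ← mul_assoc, hab, zero_mul]
    have hb : b * a ^ (n + 1) = 0 := by rw [pow_succ', ← mul_assoc, hba, zero_mul]
    rw [pow_succ' (a + b), ih, add_mul, mul_add, mul_add, ha, hb, add_zero, zero_add,
      ← pow_succ', ← pow_succ']

theorem ContinuousLinearMap.coe_pow_eq_iterate {R M : Type*} [Semiring R] [TopologicalSpace M]
    [AddCommMonoid M] [Module R M] (f : M →L[R] M) (n : ℕ) : ⇑(f ^ n) = f^[n] :=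
  hom_coe_pow _ rfl (fun _ _ ↦ rfl) f n

namespace Submodule

variable {𝕜 E : Type*} [RCLike 𝕜] [NormedAddCommGroup E] [InnerProductSpace 𝕜 E]
  (K : Submodule 𝕜 E) [K.HasOrthogonalProjection]

theorem starProjection_mul_starProjection_orthogonal :
    K.starProjection * Kᗮ.starProjection = 0 :=
  K.isOrtho_orthogonal_right.starProjection_comp_starProjection

theorem starProjection_orthogonal_mul_starProjection :
    Kᗮ.starProjection * K.starProjection = 0 :=
  K.isOrtho_orthogonal_left.starProjection_comp_starProjection

end Submodule

theorem twistedDouglasRachford_pow {𝕜 E : Type*} [RCLike 𝕜] [NormedAddCommGroup E]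
    [InnerProductSpace 𝕜 E] (M N : Submodule 𝕜 E) [M.HasOrthogonalProjection]
    [N.HasOrthogonalProjection] (n : ℕ) :
    (M.starProjection * N.starProjection + Nᗮ.starProjection * Mᗮ.starProjection) ^ (n + 1) =
      (M.starProjection * N.starProjection) ^ (n + 1) +
        (Nᗮ.starProjection * Mᗮ.starProjection) ^ (n + 1) := by
  refine add_pow_eq_pow_add_pow_of_mul_eq_zero ?_ ?_ n
  · rw [mul_assoc, ← mul_assoc N.starProjection, N.starProjection_mul_starProjection_orthogonal,
      zero_mul, mul_zero]
  · rw [mul_assoc, ← mul_assoc Mᗮ.starProjection, M.starProjection_orthogonal_mul_starProjection,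
      zero_mul, mul_zero]

theorem twisted_douglasRachford_iterates_decompose_general
    {H : Type*} [NormedAddCommGroup H] [InnerProductSpace ℝ H]
    (M N : Submodule ℝ H) [Submodule.HasOrthogonalProjection M] [Submodule.HasOrthogonalProjection N]
    (V : H → H)
    (hV : ∀ x : H, V x = (Submodule.orthogonalProjectionOnto M ((Submodule.orthogonalProjectionOnto N x : H)) : H) +
        (Submodule.orthogonalProjectionOnto Nᗮ ((Submodule.orthogonalProjectionOnto Mᗮ x : H)) : H)) :
    (∀ x₀ : H, ∀ n : ℕ, 1 ≤ n →
      V^[n] x₀ = (fun y : H => (Submodule.orthogonalProjectionOnto M ((Submodule.orthogonalProjectionOnto N y : H)) : H))^[n] x₀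
        + (fun y : H => (Submodule.orthogonalProjectionOnto Nᗮ ((Submodule.orthogonalProjectionOnto Mᗮ y : H)) : H))^[n] x₀) ∧
    (∀ x₀ : H, ∀ n : ℕ,
      (fun y : H => (Submodule.orthogonalProjectionOnto M ((Submodule.orthogonalProjectionOnto N y : H)) : H))^[n + 1] x₀ =
        (Submodule.orthogonalProjectionOnto M ((Submodule.orthogonalProjectionOnto N
          ((fun y : H => (Submodule.orthogonalProjectionOnto M ((Submodule.orthogonalProjectionOnto N y : H)) : H))^[n] x₀) : H)) : H)) ∧
    (∀ x₀ : H, ∀ n : ℕ,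
      (fun y : H => (Submodule.orthogonalProjectionOnto Nᗮ ((Submodule.orthogonalProjectionOnto Mᗮ y : H)) : H))^[n + 1] x₀ =
        (Submodule.orthogonalProjectionOnto Nᗮ ((Submodule.orthogonalProjectionOnto Mᗮ
          ((fun y : H => (Submodule.orthogonalProjectionOnto Nᗮ ((Submodule.orthogonalProjectionOnto Mᗮ y : H)) : H))^[n] x₀) : H)) : H)) := by
  refine ⟨fun x₀ n hn => ?_, fun x₀ n => Function.iterate_succ_apply' _ n x₀,
    fun x₀ n => Function.iterate_succ_apply' _ n x₀⟩
  obtain ⟨n, rfl⟩ := Nat.exists_eq_add_of_le' hn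
  have hV' : V = ⇑(M.starProjection * N.starProjection + Nᗮ.starProjection * Mᗮ.starProjection) :=
    funext hV
  rw [hV', ← ContinuousLinearMap.coe_pow_eq_iterate, twistedDouglasRachford_pow,
    add_apply, ContinuousLinearMap.coe_pow_eq_iterate,
    ContinuousLinearMap.coe_pow_eq_iterate]
  -- `starProjection` is definitionally the coerced `orthogonalProjectionOnto`
  rfl

/-- For closed linear subspaces `M, N` of a real Hilbert space, the twisted
Douglas–Rachford operator `V = P_M ∘ P_N + P_{N⊥} ∘ P_{M⊥}` satisfies, for every `n ≥ 1`,
`V^n = (P_M P_N)^n + (P_{N⊥} P_{M⊥})^n`; consequently the iterates `x_n = V^n x_0`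
decompose as `x_n = u_n + v_n` with `u_{n+1} = P_M P_N u_n` and
`v_{n+1} = P_{N⊥} P_{M⊥} v_n`. -/
theorem twisted_douglasRachford_iterates_decompose
    {H : Type*} [NormedAddCommGroup H] [InnerProductSpace ℝ H] [CompleteSpace H]
    (M N : Submodule ℝ H) [Submodule.HasOrthogonalProjection M] [Submodule.HasOrthogonalProjection N]
    (V : H → H)
    (hV : ∀ x : H, V x = (Submodule.orthogonalProjectionOnto M ((Submodule.orthogonalProjectionOnto N x : H)) : H) +
        (Submodule.orthogonalProjectionOnto Nᗮ ((Submodule.orthogonalProjectionOnto Mᗮ x : H)) : H)) :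
    (∀ x₀ : H, ∀ n : ℕ, 1 ≤ n →
      V^[n] x₀ = (fun y : H => (Submodule.orthogonalProjectionOnto M ((Submodule.orthogonalProjectionOnto N y : H)) : H))^[n] x₀
        + (fun y : H => (Submodule.orthogonalProjectionOnto Nᗮ ((Submodule.orthogonalProjectionOnto Mᗮ y : H)) : H))^[n] x₀) ∧
    (∀ x₀ : H, ∀ n : ℕ,
      (fun y : H => (Submodule.orthogonalProjectionOnto M ((Submodule.orthogonalProjectionOnto N y : H)) : H))^[n + 1] x₀ =
        (Submodule.orthogonalProjectionOnto M ((Submodule.orthogonalProjectionOnto N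
          ((fun y : H => (Submodule.orthogonalProjectionOnto M ((Submodule.orthogonalProjectionOnto N y : H)) : H))^[n] x₀) : H)) : H)) ∧
    (∀ x₀ : H, ∀ n : ℕ,
      (fun y : H => (Submodule.orthogonalProjectionOnto Nᗮ ((Submodule.orthogonalProjectionOnto Mᗮ y : H)) : H))^[n + 1] x₀ =
        (Submodule.orthogonalProjectionOnto Nᗮ ((Submodule.orthogonalProjectionOnto Mᗮ
          ((fun y : H => (Submodule.orthogonalProjectionOnto Nᗮ ((Submodule.orthogonalProjectionOnto Mᗮ y : H)) : H))^[n] x₀) : H)) : H)) :=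
  twisted_douglasRachford_iterates_decompose_general M N V hV
end

section
/- Let L₁ and L₂ be one-dimensional linear subspaces of the Euclidean plane ℝ², spanned by unit vectors u and w respectively. Let T = (1/2)(I + R_{L₂} R_{L₁}) be the Douglas–Rachford operator, where R_{L_i} = 2P_{L_i} − I and P_{L_i} is the orthogonal projection onto L_i. Then for every x ∈ ℝ², ‖T x‖ = |⟨u, w⟩| · ‖x‖. In particular, if L₁ ≠ L₂ then |⟨u, w⟩| < 1 and T^n x → 0 as n → ∞ for every x ∈ ℝ², at a linear (exponential) rate. -/
/-!
Algebraically `½(I + R₂R₁) = P₂P₁ + P₂ᗮP₁ᗮ`, and the two summands lie in the orthogonal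
subspaces `L₂` and `L₂ᗮ`. The projection onto `L₂` scales vectors of `L₁` by `|⟨u, w⟩|`; in the
plane, `L₁ᗮ` and `L₂ᗮ` are again lines meeting at the same angle, so the projection onto `L₂ᗮ`
scales vectors of `L₁ᗮ` by the same factor. Pythagoras for `x = P₁x + P₁ᗮx` then gives
`‖Tx‖ = |⟨u, w⟩| ‖x‖`, and iterating gives the linear rate.
-/

open Filter Module Submodule
open scoped RealInnerProductSpace

section DouglasRachford

variable {E : Type*} [NormedAddCommGroup E] [InnerProductSpace ℝ E]

noncomputable def douglasRachford (K₁ K₂ : Submodule ℝ E) [K₁.HasOrthogonalProjection]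
    [K₂.HasOrthogonalProjection] (x : E) : E :=
  (1 / 2 : ℝ) • (x + K₂.reflection (K₁.reflection x))

theorem douglasRachford_eq_starProjection_add (K₁ K₂ : Submodule ℝ E)
    [K₁.HasOrthogonalProjection] [K₂.HasOrthogonalProjection] (x : E) :
    douglasRachford K₁ K₂ x =
      K₂.starProjection (K₁.starProjection x) + K₂ᗮ.starProjection (K₁ᗮ.starProjection x) := by
  simp only [douglasRachford, Submodule.reflection_apply, starProjection_orthogonal_val, map_sub,
    map_nsmul]
  module

theorem norm_sq_starProjection_add_starProjection_orthogonal (K : Submodule ℝ E)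
    [K.HasOrthogonalProjection] (a b : E) :
    ‖K.starProjection a + Kᗮ.starProjection b‖ ^ 2 =
      ‖K.starProjection a‖ ^ 2 + ‖Kᗮ.starProjection b‖ ^ 2 := by
  simp only [sq]
  exact norm_add_sq_eq_norm_sq_add_norm_sq_real <|
    inner_right_of_mem_orthogonal (K.starProjection_apply_mem a) (Kᗮ.starProjection_apply_mem b)

theorem norm_starProjection_unit_singleton {w : E} (hw : ‖w‖ = 1) (y : E) :
    ‖(ℝ ∙ w).starProjection y‖ = |⟪w, y⟫| := by
  rw [starProjection_unit_singleton ℝ hw, norm_smul, hw, mul_one, Real.norm_eq_abs]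

theorem norm_starProjection_span_of_mem_span {u w y : E} (hu : ‖u‖ = 1) (hw : ‖w‖ = 1)
    (hy : y ∈ ℝ ∙ u) : ‖(ℝ ∙ w).starProjection y‖ = |⟪u, w⟫| * ‖y‖ := by
  obtain ⟨r, rfl⟩ := mem_span_singleton.mp hy
  rw [norm_starProjection_unit_singleton hw, real_inner_smul_right, norm_smul, hu,
    real_inner_comm, abs_mul, Real.norm_eq_abs]
  ring

theorem abs_real_inner_eq_norm_mul_norm_of_mem_orthogonal_singleton [Fact (finrank ℝ E = 2)]
    {u y z : E} (hu : u ≠ 0) (hy : y ∈ (ℝ ∙ u)ᗮ) (hz : z ∈ (ℝ ∙ u)ᗮ) :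
    |⟪z, y⟫| = ‖z‖ * ‖y‖ := by
  rcases eq_or_ne z 0 with rfl | hz₀
  · simp
  rw [mem_orthogonal_singleton_iff_inner_right] at hy hz
  rw [← Real.norm_eq_abs]
  exact ((norm_inner_eq_norm_tfae ℝ z y).out 0 3).2
    (Or.inr (mem_span_singleton_of_inner_eq_zero_of_inner_eq_zero hu hz₀ hy hz))

theorem norm_starProjection_orthogonal_of_mem_orthogonal [Fact (finrank ℝ E = 2)] {u w y : E}
    (hu : ‖u‖ = 1) (hw : ‖w‖ = 1) (hy : y ∈ (ℝ ∙ u)ᗮ) :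
    ‖(ℝ ∙ w)ᗮ.starProjection y‖ = |⟪u, w⟫| * ‖y‖ := by
  set z := (ℝ ∙ u)ᗮ.starProjection w with hz_def
  have hz : ‖z‖ ^ 2 = 1 - ⟪u, w⟫ ^ 2 := by
    have := norm_sq_eq_add_norm_sq_starProjection w (ℝ ∙ u)
    rw [norm_starProjection_unit_singleton hu, sq_abs, hw] at this
    linarith
  -- `z` and `y` lie on the line `(ℝ ∙ u)ᗮ`, so Cauchy–Schwarz is an equality for them.
  have hwy : ⟪w, y⟫ ^ 2 = (1 - ⟪u, w⟫ ^ 2) * ‖y‖ ^ 2 := by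
    have hzy : |⟪z, y⟫| = ‖z‖ * ‖y‖ :=
      abs_real_inner_eq_norm_mul_norm_of_mem_orthogonal_singleton
        (norm_ne_zero_iff.mp (by simp [hu])) hy (starProjection_apply_mem _ _)
    rw [hz_def, inner_starProjection_left_eq_right, starProjection_eq_self_iff.mpr hy] at hzy
    rw [← sq_abs, hzy, mul_pow, hz]
  have hsq : ‖(ℝ ∙ w)ᗮ.starProjection y‖ ^ 2 = (|⟪u, w⟫| * ‖y‖) ^ 2 := by
    have := norm_sq_eq_add_norm_sq_starProjection y (ℝ ∙ w)
    rw [norm_starProjection_unit_singleton hw, sq_abs, hwy] at this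
    rw [mul_pow, sq_abs]
    linarith
  exact (pow_left_inj₀ (norm_nonneg _) (by positivity) two_ne_zero).mp hsq

theorem norm_iterate_of_norm_apply_eq_mul {F : Type*} [SeminormedAddGroup F] {f : F → F} {c : ℝ}
    (hf : ∀ x, ‖f x‖ = c * ‖x‖) (x : F) (n : ℕ) : ‖f^[n] x‖ = c ^ n * ‖x‖ := by
  induction n with
  | zero => simp
  | succ n ih => rw [Function.iterate_succ_apply', hf, ih, pow_succ]; ring

theorem tendsto_iterate_zero_of_norm_apply_eq_mul {F : Type*} [SeminormedAddGroup F] {f : F → F}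
    {c : ℝ} (hf : ∀ x, ‖f x‖ = c * ‖x‖) (hc₀ : 0 ≤ c) (hc : c < 1) (x : F) :
    Tendsto (fun n : ℕ => f^[n] x) atTop (nhds 0) := by
  rw [tendsto_zero_iff_norm_tendsto_zero]
  simpa [norm_iterate_of_norm_apply_eq_mul hf] using
    (tendsto_pow_atTop_nhds_zero_of_lt_one hc₀ hc).mul_const ‖x‖

theorem abs_real_inner_lt_one_of_span_ne {u w : E} (hu : ‖u‖ = 1) (hw : ‖w‖ = 1)
    (h : (ℝ ∙ u) ≠ (ℝ ∙ w)) : |⟪u, w⟫| < 1 := by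
  refine (abs_real_inner_le_norm u w).trans_eq (by simp [hu, hw]) |>.lt_of_ne fun h₁ => h ?_
  obtain ⟨-, r, hr, rfl⟩ :=
    (abs_real_inner_div_norm_mul_norm_eq_one_iff u w).mp (by simp [hu, hw, h₁])
  exact (span_singleton_smul_eq (isUnit_iff_ne_zero.mpr hr) u).symm

theorem norm_douglasRachford_span_singleton [Fact (finrank ℝ E = 2)] {u w : E} (hu : ‖u‖ = 1)
    (hw : ‖w‖ = 1) (x : E) : ‖douglasRachford (ℝ ∙ u) (ℝ ∙ w) x‖ = |⟪u, w⟫| * ‖x‖ := by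
  refine (pow_left_inj₀ (norm_nonneg _) (by positivity) two_ne_zero).mp ?_
  rw [mul_pow, douglasRachford_eq_starProjection_add,
    norm_sq_starProjection_add_starProjection_orthogonal,
    norm_starProjection_span_of_mem_span hu hw (starProjection_apply_mem _ _),
    norm_starProjection_orthogonal_of_mem_orthogonal hu hw (starProjection_apply_mem _ _),
    mul_pow, mul_pow, ← mul_add, ← norm_sq_eq_add_norm_sq_starProjection]

end DouglasRachford

/-- For one-dimensional subspaces `L₁ = span{u}`, `L₂ = span{w}` of the
Euclidean plane spanned by unit vectors `u, w`, the Douglas–Rachford operator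
`T = (1/2)(I + R_{L₂} R_{L₁})` satisfies `‖T x‖ = |⟨u,w⟩| ‖x‖` for all `x`; in particular,
if `L₁ ≠ L₂` then `|⟨u,w⟩| < 1`, `‖Tⁿ x‖ = |⟨u,w⟩|ⁿ ‖x‖`, and `Tⁿ x → 0` for every `x`. -/
theorem douglasRachford_two_lines_through_origin
    (u w : EuclideanSpace ℝ (Fin 2)) (hu : ‖u‖ = 1) (hw : ‖w‖ = 1)
    (L₁ L₂ : Submodule ℝ (EuclideanSpace ℝ (Fin 2)))
    (hL₁ : L₁ = Submodule.span ℝ {u}) (hL₂ : L₂ = Submodule.span ℝ {w})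
    (T : EuclideanSpace ℝ (Fin 2) → EuclideanSpace ℝ (Fin 2))
    (hT : ∀ x, T x = (1 / 2 : ℝ) • (x +
      (2 • ((Submodule.orthogonalProjectionOnto L₂
          (2 • ((Submodule.orthogonalProjectionOnto L₁ x : EuclideanSpace ℝ (Fin 2))) - x) :
            EuclideanSpace ℝ (Fin 2)))
        - (2 • ((Submodule.orthogonalProjectionOnto L₁ x : EuclideanSpace ℝ (Fin 2))) - x)))) :
    (∀ x, ‖T x‖ = |(inner ℝ u w : ℝ)| * ‖x‖) ∧
      (L₁ ≠ L₂ →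
        |(inner ℝ u w : ℝ)| < 1 ∧
        (∀ x, ∀ n : ℕ, ‖T^[n] x‖ = |(inner ℝ u w : ℝ)| ^ n * ‖x‖) ∧
        ∀ x, Tendsto (fun n : ℕ => T^[n] x) atTop (nhds 0)) := by
  subst hL₁ hL₂
  have hT_eq : T = douglasRachford (ℝ ∙ u) (ℝ ∙ w) := funext fun x => hT x
  have : Fact (finrank ℝ (EuclideanSpace ℝ (Fin 2)) = 2) := ⟨finrank_euclideanSpace_fin⟩
  have hnorm : ∀ x, ‖T x‖ = |⟪u, w⟫| * ‖x‖ := hT_eq ▸ norm_douglasRachford_span_singleton hu hw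
  refine ⟨hnorm, fun hne => ?_⟩
  have hlt := abs_real_inner_lt_one_of_span_ne hu hw hne
  exact ⟨hlt, norm_iterate_of_norm_apply_eq_mul hnorm,
    tendsto_iterate_zero_of_norm_apply_eq_mul hnorm (abs_nonneg _) hlt⟩
end

section
/- Let L₁ and L₂ be two affine lines in the Euclidean plane ℝ² that intersect in exactly one point f (L₁ ∩ L₂ = {f}), with unit direction vectors u and w respectively. Let T = (1/2)(I + R_{L₂} R_{L₁}) be the Douglas–Rachford operator, where R_{L_i} = 2P_{L_i} − I and P_{L_i} is the metric projection onto the closed convex set L_i. Then for every x ∈ ℝ² and every n ≥ 0, ‖T^n x − f‖ = |⟨u, w⟩|^n ‖x − f‖, and since |⟨u, w⟩| < 1, the Douglas–Rachford iterates from any starting point converge to the common point f at a linear (exponential) rate. -/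
/-!
Around the common point `f`, the reflections `R_{L₁}`, `R_{L₂}` act on `v = x - f` as reflections
across the lines `ℝ u`, `ℝ w`, and expanding `‖(v + R_w R_u v) / 2‖²` in any inner product space
gives `‖v‖² - ⟪u,v⟫² - ⟪w,v⟫² + 2⟪u,v⟫⟪w,v⟫⟪u,w⟫`. In the plane the Gram determinant of `u, w, v`
vanishes, which turns this into `⟪u,w⟫² ‖v‖²`. Finally `|⟪u,w⟫| = 1` would make the lines parallel,
hence equal, contradicting `L₁ ∩ L₂ = {f}`.
-/

open Filter RealInnerProductSpace

section InnerProductSpace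

variable {E : Type*} [NormedAddCommGroup E] [InnerProductSpace ℝ E]

lemma norm_sub_smul_sq_of_norm_eq_one {u : E} (hu : ‖u‖ = 1) (v : E) (t : ℝ) :
    ‖v - t • u‖ ^ 2 = ‖v - ⟪u, v⟫ • u‖ ^ 2 + (t - ⟪u, v⟫) ^ 2 := by
  have expand : ∀ s : ℝ, ‖v - s • u‖ ^ 2 = ‖v‖ ^ 2 - 2 * s * ⟪u, v⟫ + s ^ 2 := fun s ↦ by
    rw [norm_sub_sq_real, real_inner_smul_right, real_inner_comm, norm_smul, hu,
      Real.norm_eq_abs, mul_one, sq_abs]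
    ring
  rw [expand, expand]
  ring

lemma eq_add_inner_smul_of_forall_dist_le {u : E} (hu : ‖u‖ = 1) {f z p : E}
    (hp : p ∈ {p | ∃ t : ℝ, p = f + t • u})
    (hmin : ∀ y ∈ {p | ∃ t : ℝ, p = f + t • u}, dist z p ≤ dist z y) :
    p = f + ⟪u, z - f⟫ • u := by
  obtain ⟨t, rfl⟩ := hp
  have dist_eq : ∀ r : ℝ, dist z (f + r • u) = ‖(z - f) - r • u‖ := fun r ↦ by
    rw [dist_eq_norm, sub_add_eq_sub_sub]
  have hle := hmin _ ⟨⟪u, z - f⟫, rfl⟩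
  rw [dist_eq, dist_eq, ← sq_le_sq₀ (norm_nonneg _) (norm_nonneg _),
    norm_sub_smul_sq_of_norm_eq_one hu, norm_sub_smul_sq_of_norm_eq_one hu] at hle
  have : t = ⟪u, z - f⟫ := by nlinarith [sq_nonneg (t - ⟪u, z - f⟫)]
  rw [this]

/-- For a unit vector `u`, the reflection across the line `ℝ u`. -/
def lineReflection (u v : E) : E := (2 * ⟪u, v⟫) • u - v

lemma norm_sq_midpoint_lineReflection_comp {u w : E} (hu : ‖u‖ = 1) (hw : ‖w‖ = 1) (v : E) :
    ‖(1 / 2 : ℝ) • (v + lineReflection w (lineReflection u v))‖ ^ 2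
      = ‖v‖ ^ 2 - ⟪u, v⟫ ^ 2 - ⟪w, v⟫ ^ 2 + 2 * ⟪u, v⟫ * ⟪w, v⟫ * ⟪u, w⟫ := by
  set a := ⟪u, v⟫
  set b := ⟪w, v⟫
  set c := ⟪u, w⟫
  have huu : ⟪u, u⟫ = 1 := by rw [real_inner_self_eq_norm_sq, hu, one_pow]
  have hww : ⟪w, w⟫ = 1 := by rw [real_inner_self_eq_norm_sq, hw, one_pow]
  have hwu : ⟪w, u⟫ = c := real_inner_comm u w
  have hvu : ⟪v, u⟫ = a := real_inner_comm u v
  have hvw : ⟪v, w⟫ = b := real_inner_comm w v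
  have hTv : (1 / 2 : ℝ) • (v + lineReflection w (lineReflection u v))
      = v - a • u + (2 * a * c - b) • w := by
    simp only [lineReflection, inner_sub_right, real_inner_smul_right, hwu]
    module
  rw [hTv, ← real_inner_self_eq_norm_sq, ← real_inner_self_eq_norm_sq]
  simp only [inner_sub_left, inner_sub_right, inner_add_left, inner_add_right,
    real_inner_smul_left, real_inner_smul_right, huu, hww, hwu, hvu, hvw]
  ring

lemma gram_det_eq_zero_of_finrank_le_two [FiniteDimensional ℝ E]
    (hE : Module.finrank ℝ E ≤ 2) (u w v : E) :
    ‖u‖ ^ 2 * ‖w‖ ^ 2 * ‖v‖ ^ 2 + 2 * ⟪u, w⟫ * ⟪w, v⟫ * ⟪u, v⟫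
      - ⟪u, w⟫ ^ 2 * ‖v‖ ^ 2 - ⟪w, v⟫ ^ 2 * ‖u‖ ^ 2 - ⟪u, v⟫ ^ 2 * ‖w‖ ^ 2 = 0 := by
  by_contra hdet
  have hli : LinearIndependent ℝ ![u, w, v] := by
    refine Matrix.linearIndependent_of_det_gram_ne_zero ?_
    rw [Matrix.det_fin_three]
    simp only [Matrix.gram_apply, Matrix.cons_val, real_inner_self_eq_norm_sq,
      real_inner_comm u w, real_inner_comm u v, real_inner_comm w v]
    convert hdet using 1
    ring
  have := hli.fintype_card_le_finrank
  simp only [Fintype.card_fin] at this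
  omega

lemma norm_midpoint_lineReflection_comp [FiniteDimensional ℝ E] (hE : Module.finrank ℝ E ≤ 2)
    {u w : E} (hu : ‖u‖ = 1) (hw : ‖w‖ = 1) (v : E) :
    ‖(1 / 2 : ℝ) • (v + lineReflection w (lineReflection u v))‖ = |⟪u, w⟫| * ‖v‖ := by
  rw [← sq_eq_sq₀ (norm_nonneg _) (by positivity), norm_sq_midpoint_lineReflection_comp hu hw,
    mul_pow, sq_abs]
  have := gram_det_eq_zero_of_finrank_le_two hE u w v
  rw [hu, hw] at this
  linear_combination this

lemma two_nsmul_add_inner_smul_sub_sub (f u z : E) :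
    2 • (f + ⟪u, z - f⟫ • u) - z - f = lineReflection u (z - f) := by
  rw [lineReflection]
  module

lemma abs_inner_lt_one_of_inter_eq_singleton {u w f : E} (hu : ‖u‖ = 1) (hw : ‖w‖ = 1)
    (hmeet : {p | ∃ t : ℝ, p = f + t • u} ∩ {p | ∃ t : ℝ, p = f + t • w} = {f}) :
    |⟪u, w⟫| < 1 := by
  refine lt_of_le_of_ne (by simpa [hu, hw] using abs_real_inner_le_norm u w) fun h ↦ ?_
  obtain ⟨-, r, hr, rfl⟩ := (abs_real_inner_div_norm_mul_norm_eq_one_iff u w).1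
    (by rw [hu, hw, mul_one, div_one, h])
  have hmem : f + r • u ∈ ({f} : Set E) := hmeet ▸ ⟨⟨r, rfl⟩, ⟨1, by rw [one_smul]⟩⟩
  have hu0 : u ≠ 0 := by rintro rfl; simp at hu
  simp [hr, hu0] at hmem

end InnerProductSpace

lemma norm_iterate_sub_eq_pow_mul {G : Type*} [SeminormedAddGroup G] {T : G → G} {f : G} {q : ℝ}
    (hT : ∀ y, ‖T y - f‖ = q * ‖y - f‖) (x : G) (n : ℕ) :
    ‖T^[n] x - f‖ = q ^ n * ‖x - f‖ := by
  induction n with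
  | zero => simp
  | succ n ih => rw [Function.iterate_succ_apply', hT, ih, pow_succ, mul_comm _ q, mul_assoc]

/-- For two affine lines in the Euclidean plane with unit directions `u, w`
meeting in exactly the point `f`, the Douglas–Rachford operator
`T = (1/2)(I + R_{L₂} R_{L₁})` (with metric projections onto the lines) satisfies
`‖Tⁿ x − f‖ = |⟨u,w⟩|ⁿ ‖x − f‖` for all `x` and `n`; since `|⟨u,w⟩| < 1`, the iterates
converge to `f` from every starting point. -/
theorem douglasRachford_two_affine_lines
    (u w f : EuclideanSpace ℝ (Fin 2)) (hu : ‖u‖ = 1) (hw : ‖w‖ = 1)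
    (L₁ L₂ : Set (EuclideanSpace ℝ (Fin 2)))
    (hL₁ : L₁ = {p | ∃ t : ℝ, p = f + t • u})
    (hL₂ : L₂ = {p | ∃ t : ℝ, p = f + t • w})
    (hmeet : L₁ ∩ L₂ = {f})
    (P₁ P₂ : EuclideanSpace ℝ (Fin 2) → EuclideanSpace ℝ (Fin 2))
    (hP₁ : ∀ z, P₁ z ∈ L₁ ∧ ∀ y ∈ L₁, dist z (P₁ z) ≤ dist z y)
    (hP₂ : ∀ z, P₂ z ∈ L₂ ∧ ∀ y ∈ L₂, dist z (P₂ z) ≤ dist z y)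
    (T : EuclideanSpace ℝ (Fin 2) → EuclideanSpace ℝ (Fin 2))
    (hT : ∀ x, T x = (1 / 2 : ℝ) • (x + (2 • P₂ (2 • P₁ x - x) - (2 • P₁ x - x)))) :
    (∀ x, ∀ n : ℕ, ‖T^[n] x - f‖ = |(inner ℝ u w : ℝ)| ^ n * ‖x - f‖) ∧
      |(inner ℝ u w : ℝ)| < 1 ∧
      ∀ x, Tendsto (fun n : ℕ => T^[n] x) atTop (nhds f) := by
  subst hL₁ hL₂
  have hR₁ (z) : 2 • P₁ z - z - f = lineReflection u (z - f) := by
    rw [eq_add_inner_smul_of_forall_dist_le hu (hP₁ z).1 (hP₁ z).2,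
      two_nsmul_add_inner_smul_sub_sub]
  have hR₂ (z) : 2 • P₂ z - z - f = lineReflection w (z - f) := by
    rw [eq_add_inner_smul_of_forall_dist_le hw (hP₂ z).1 (hP₂ z).2,
      two_nsmul_add_inner_smul_sub_sub]
  have hstep (x) :
      T x - f = (1 / 2 : ℝ) • ((x - f) + lineReflection w (lineReflection u (x - f))) := by
    rw [hT, ← hR₁, ← hR₂]
    module
  have hiter := norm_iterate_sub_eq_pow_mul fun y ↦ by
    rw [hstep, norm_midpoint_lineReflection_comp (by simp) hu hw]
  have hlt := abs_inner_lt_one_of_inter_eq_singleton hu hw hmeet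
  refine ⟨hiter, hlt, fun x ↦ tendsto_iff_norm_sub_tendsto_zero.2 ?_⟩
  simpa only [hiter, zero_mul] using
    (tendsto_pow_atTop_nhds_zero_of_lt_one (abs_nonneg _) hlt).mul_const ‖x - f‖
end
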